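/- arXiv:2102.13496 — 8 statements merged into one kernel-verified Lean document; each statement's English description precedes it below -/
import Mathlib

section
/- Let F be a cumulative distribution function on [0,∞) with density f that is MHR, i.e. the hazard rate f(t)/(1 − F(t)) is monotone nondecreasing on {t : F(t) < 1}, and suppose the mean µ = ∫₀^∞ t·f(t) dt is finite. Let α > 0 and define u(v,b) = v·F(b) − α·b·(1 − F(b)) − α·∫₀^b t·f(t) dt. Then for every v ≥ 0 and every b ≥ 0, u(v,b) ≤ max(0, v − α·µ); moreover u(v,0) = 0 and u(v,b) → v − α·µ as b → ∞. Consequently the supremum utility of the agent is max(0, v − α·µ): bidding 0 is optimal when v < α·µ and bidding arbitrarily high is optimal when v ≥ α·µ. -/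
/-!
MHR makes the survival function `G = 1 - F` new-better-than-used, `G (b + s) ≤ G b * G s`: the
function `s ↦ log G (b + s) - log G s` has derivative `h s - h (b + s) ≤ 0`, `h` the hazard rate.
Integrating over `s` bounds the tail, `∫_b^∞ G ≤ G b * μ`, where `μ = ∫_0^∞ G` is the mean.
Integration by parts turns the utility into `v F b - α ∫_0^b G ≤ F b * (v - α μ)`, a convex
combination of `0` and `v - α μ`; the first is attained at `b = 0`, the second as `b → ∞`, where
`b G b ≤ ∫_b^∞ t f t → 0`.
-/

open MeasureTheory Filter Set Topology

variable {F f : ℝ → ℝ}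

lemma le_one_of_hasDerivAt_of_tendsto (hF : ∀ x, HasDerivAt F (f x) x) (hf : ∀ x, 0 ≤ f x)
    (hF1 : Tendsto F atTop (𝓝 1)) (x : ℝ) : F x ≤ 1 :=
  (monotone_of_hasDerivAt_nonneg hF hf).ge_of_tendsto hF1 x

lemma integral_mul_deriv_eq_integral_one_sub (hF : ∀ x, HasDerivAt F (f x) x) (hf : ∀ x, 0 ≤ f x)
    (hF0 : F 0 = 0) (b : ℝ) :
    ∫ t in (0:ℝ)..b, t * f t = (∫ t in (0:ℝ)..b, (1 - F t)) - b * (1 - F b) := by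
  have hfi : IntervalIntegrable f volume 0 b :=
    intervalIntegral.intervalIntegrable_deriv_of_nonneg
      (fun x _ ↦ (hF x).continuousAt.continuousWithinAt) (fun x _ ↦ hF x) (fun x _ ↦ hf x)
  have hFc : Continuous F := continuous_iff_continuousAt.2 fun x ↦ (hF x).continuousAt
  rw [intervalIntegral.integral_mul_deriv_eq_deriv_mul (u := fun t ↦ t) (u' := fun _ ↦ 1)
    (fun x _ ↦ hasDerivAt_id x) (fun x _ ↦ hF x) intervalIntegrable_const hfi,
    intervalIntegral.integral_sub intervalIntegrable_const (hFc.intervalIntegrable 0 b)]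
  simp only [hF0, mul_zero, sub_zero, one_mul, mul_one, intervalIntegral.integral_const,
    smul_eq_mul]
  ring

lemma mul_one_sub_le_integral_Ioi (hF : ∀ x, HasDerivAt F (f x) x) (hf : ∀ x, 0 ≤ f x)
    (hF1 : Tendsto F atTop (𝓝 1)) {b : ℝ} (hint : IntegrableOn (fun t ↦ t * f t) (Ioi b)) :
    b * (1 - F b) ≤ ∫ t in Ioi b, t * f t := by
  have hfi : IntegrableOn f (Ioi b) :=
    integrableOn_Ioi_deriv_of_nonneg' (fun x _ ↦ hF x) (fun x _ ↦ hf x) hF1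
  calc b * (1 - F b) = ∫ t in Ioi b, b * f t := by
        rw [integral_const_mul, integral_Ioi_of_hasDerivAt_of_nonneg' (fun x _ ↦ hF x)
          (fun x _ ↦ hf x) hF1]
    _ ≤ ∫ t in Ioi b, t * f t :=
        setIntegral_mono_on (hfi.const_mul b) hint measurableSet_Ioi
          fun t ht ↦ mul_le_mul_of_nonneg_right (le_of_lt ht) (hf t)

lemma tendsto_mul_one_sub_atTop (hF : ∀ x, HasDerivAt F (f x) x) (hf : ∀ x, 0 ≤ f x)
    (hF1 : Tendsto F atTop (𝓝 1)) {a : ℝ} (hint : IntegrableOn (fun t ↦ t * f t) (Ioi a)) :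
    Tendsto (fun b ↦ b * (1 - F b)) atTop (𝓝 0) := by
  refine tendsto_of_tendsto_of_tendsto_of_le_of_le' tendsto_const_nhds
    (tendsto_integral_Ioi_zero (f := fun t ↦ t * f t) (μ := volume) tendsto_id) ?_ ?_
  · filter_upwards [eventually_ge_atTop 0] with b hb
    exact mul_nonneg hb (sub_nonneg.2 (le_one_of_hasDerivAt_of_tendsto hF hf hF1 b))
  · filter_upwards [eventually_ge_atTop a] with b hb
    exact mul_one_sub_le_integral_Ioi hF hf hF1 (hint.mono_set (Ioi_subset_Ioi hb))

lemma tendsto_integral_one_sub_atTop (hF : ∀ x, HasDerivAt F (f x) x) (hf : ∀ x, 0 ≤ f x)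
    (hF0 : F 0 = 0) (hF1 : Tendsto F atTop (𝓝 1))
    (hint : IntegrableOn (fun t ↦ t * f t) (Ioi 0)) :
    Tendsto (fun b ↦ ∫ t in (0:ℝ)..b, (1 - F t)) atTop (𝓝 (∫ t in Ioi 0, t * f t)) := by
  have h := (tendsto_mul_one_sub_atTop hF hf hF1 hint).add
    (intervalIntegral_tendsto_integral_Ioi 0 hint tendsto_id)
  rw [zero_add] at h
  refine h.congr fun b ↦ ?_
  simp only [id, integral_mul_deriv_eq_integral_one_sub hF hf hF0]
  ring

lemma integrableOn_one_sub_and_integral_eq (hF : ∀ x, HasDerivAt F (f x) x) (hf : ∀ x, 0 ≤ f x)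
    (hF0 : F 0 = 0) (hF1 : Tendsto F atTop (𝓝 1))
    (hint : IntegrableOn (fun t ↦ t * f t) (Ioi 0)) :
    IntegrableOn (fun t ↦ 1 - F t) (Ioi 0) ∧
      ∫ t in Ioi 0, (1 - F t) = ∫ t in Ioi 0, t * f t := by
  have hlim := tendsto_integral_one_sub_atTop hF hf hF0 hF1 hint
  have hGi : IntegrableOn (fun t ↦ 1 - F t) (Ioi 0) := by
    refine integrableOn_Ioi_of_intervalIntegral_norm_tendsto _ 0
      (fun _ ↦ ?_) tendsto_id (hlim.congr fun b ↦ ?_)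
    · exact (continuous_const.sub
        (continuous_iff_continuousAt.2 fun x ↦ (hF x).continuousAt)).integrableOn_Ioc
    · refine intervalIntegral.integral_congr fun x _ ↦ ?_
      exact (abs_of_nonneg (sub_nonneg.2 (le_one_of_hasDerivAt_of_tendsto hF hf hF1 x))).symm
  exact ⟨hGi, tendsto_nhds_unique (intervalIntegral_tendsto_integral_Ioi 0 hGi tendsto_id) hlim⟩

lemma one_sub_add_le_mul (hF : ∀ x, HasDerivAt F (f x) x) (hf : ∀ x, 0 ≤ f x)
    (hF0 : F 0 = 0) (hF1 : Tendsto F atTop (𝓝 1))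
    (hMHR : ∀ s t : ℝ, 0 ≤ s → s ≤ t → F t < 1 → f s / (1 - F s) ≤ f t / (1 - F t))
    {b s : ℝ} (hb : 0 ≤ b) (hs : 0 ≤ s) :
    1 - F (b + s) ≤ (1 - F b) * (1 - F s) := by
  have hle := le_one_of_hasDerivAt_of_tendsto hF hf hF1
  rcases (hle (b + s)).eq_or_lt with heq | hlt
  · rw [heq, sub_self]
    exact mul_nonneg (sub_nonneg.2 (hle b)) (sub_nonneg.2 (hle s))
  have hmono := monotone_of_hasDerivAt_nonneg hF hf
  have hpos : ∀ x, x ≤ b + s → 0 < 1 - F x := fun x hx ↦ sub_pos.2 ((hmono hx).trans_lt hlt)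
  have hlog : ∀ y ≤ b + s, HasDerivAt (fun z ↦ Real.log (1 - F z)) (-f y / (1 - F y)) y :=
    fun y hy ↦ by simpa using ((hF y).const_sub 1).log (hpos y hy).ne'
  set g : ℝ → ℝ := fun x ↦ Real.log (1 - F (b + x)) - Real.log (1 - F x)
  have hg : ∀ x ∈ Icc 0 s, HasDerivAt g (-f (b + x) / (1 - F (b + x)) - -f x / (1 - F x)) x := by
    intro x hx
    exact ((hlog (b + x) (by linarith [hx.2])).comp_const_add b x).sub
      (hlog x (by linarith [hx.2]))
  have hanti : AntitoneOn g (Icc 0 s) := by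
    refine antitoneOn_of_hasDerivWithinAt_nonpos (convex_Icc 0 s)
      (f' := fun x ↦ -f (b + x) / (1 - F (b + x)) - -f x / (1 - F x))
      (fun x hx ↦ (hg x hx).continuousAt.continuousWithinAt) (fun x hx ↦ ?_) (fun x hx ↦ ?_)
    · rw [interior_Icc] at hx
      exact (hg x (Ioo_subset_Icc_self hx)).hasDerivWithinAt
    · rw [interior_Icc] at hx
      have := hMHR x (b + x) hx.1.le (by linarith [hx.1])
        ((hmono (by linarith [hx.2])).trans_lt hlt)
      rw [neg_div, neg_div]
      linarith
  have := hanti ⟨le_rfl, hs⟩ ⟨hs, le_rfl⟩ hs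
  simp only [g, add_zero, hF0, sub_zero, Real.log_one] at this
  rw [← Real.log_le_log_iff (hpos _ le_rfl) (mul_pos (hpos b (by linarith)) (hpos s (by linarith))),
    Real.log_mul (hpos b (by linarith)).ne' (hpos s (by linarith)).ne']
  linarith

lemma integral_Ioi_le_mul_integral_Ioi_zero {G : ℝ → ℝ} {b : ℝ} (hG : ∀ t, 0 ≤ G t)
    (hGi : IntegrableOn G (Ioi 0)) (hsub : ∀ s, 0 ≤ s → G (s + b) ≤ G b * G s) :
    ∫ t in Ioi b, G t ≤ G b * ∫ t in Ioi 0, G t := by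
  have htrans : ∫ s in Ioi 0, G (s + b) = ∫ t in Ioi b, G t := by
    simpa using (measurePreserving_add_right volume b).setIntegral_preimage_emb
      (measurableEmbedding_addRight b) G (Ioi b)
  rw [← htrans, ← integral_const_mul]
  exact integral_mono_of_nonneg (Eventually.of_forall fun s ↦ hG _) (hGi.const_mul _)
    ((ae_restrict_mem measurableSet_Ioi).mono fun s hs ↦ hsub s (le_of_lt hs))

lemma mul_integral_Ioi_le_integral_one_sub (hF : ∀ x, HasDerivAt F (f x) x)
    (hf : ∀ x, 0 ≤ f x) (hF0 : F 0 = 0) (hF1 : Tendsto F atTop (𝓝 1))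
    (hMHR : ∀ s t : ℝ, 0 ≤ s → s ≤ t → F t < 1 → f s / (1 - F s) ≤ f t / (1 - F t))
    (hGi : IntegrableOn (fun t ↦ 1 - F t) (Ioi 0)) {b : ℝ} (hb : 0 ≤ b) :
    F b * ∫ t in Ioi 0, (1 - F t) ≤ ∫ t in (0:ℝ)..b, (1 - F t) := by
  have htail := integral_Ioi_le_mul_integral_Ioi_zero (b := b)
    (fun t ↦ sub_nonneg.2 (le_one_of_hasDerivAt_of_tendsto hF hf hF1 t)) hGi
    fun s hs ↦ add_comm s b ▸ one_sub_add_le_mul hF hf hF0 hF1 hMHR hb hs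
  have hsplit := intervalIntegral.integral_interval_add_Ioi hGi (hGi.mono_set (Ioi_subset_Ioi hb))
  linarith

lemma mul_le_max_zero {p x : ℝ} (hp : p ∈ Icc 0 1) : p * x ≤ max 0 x := by
  rcases le_total x 0 with hx | hx
  · exact (mul_nonpos_of_nonneg_of_nonpos hp.1 hx).trans (le_max_left _ _)
  · exact (mul_le_of_le_one_left hx hp.2).trans (le_max_right _ _)

lemma isLUB_image_Ici_of_le_max {g : ℝ → ℝ} {c : ℝ} (hle : ∀ b, 0 ≤ b → g b ≤ max (g 0) c)
    (hlim : Tendsto g atTop (𝓝 c)) : IsLUB (g '' Ici 0) (max (g 0) c) := by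
  refine ⟨?_, fun w hw ↦ max_le (hw ⟨0, self_mem_Ici, rfl⟩) ?_⟩
  · rintro _ ⟨b, hb, rfl⟩
    exact hle b hb
  · exact le_of_tendsto hlim (by
      filter_upwards [eventually_ge_atTop 0] with b hb
      exact hw ⟨b, hb, rfl⟩)

theorem sample_bid_mhr_best_response_general
    (F f : ℝ → ℝ)
    (hf_nonneg : ∀ x, 0 ≤ f x)
    (hF_deriv : ∀ x, HasDerivAt F (f x) x)
    (hF_zero : F 0 = 0)
    (hF_lim : Tendsto F atTop (nhds 1))
    (hMHR : ∀ s t : ℝ, 0 ≤ s → s ≤ t → F t < 1 →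
      f s / (1 - F s) ≤ f t / (1 - F t))
    (hint : IntegrableOn (fun t => t * f t) (Set.Ioi (0:ℝ)))
    (α : ℝ) (hα : 0 < α)
    (μ : ℝ) (hμ : μ = ∫ t in Set.Ioi (0:ℝ), t * f t)
    (u : ℝ → ℝ → ℝ)
    (hu : ∀ v b, u v b = v * F b - α * b * (1 - F b) - α * ∫ t in (0:ℝ)..b, t * f t) :
    (∀ v b : ℝ, 0 ≤ v → 0 ≤ b → u v b ≤ max 0 (v - α * μ))
    ∧ (∀ v : ℝ, u v 0 = 0)
    ∧ (∀ v : ℝ, 0 ≤ v → Tendsto (fun b => u v b) atTop (nhds (v - α * μ)))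
    ∧ (∀ v : ℝ, 0 ≤ v → IsLUB ((fun b => u v b) '' Set.Ici 0) (max 0 (v - α * μ))) := by
  obtain ⟨hGi, hGμ⟩ := integrableOn_one_sub_and_integral_eq hF_deriv hf_nonneg hF_zero hF_lim hint
  rw [← hμ] at hGμ
  have hu' : ∀ v b, u v b = v * F b - α * ∫ t in (0:ℝ)..b, (1 - F t) := fun v b ↦ by
    rw [hu, integral_mul_deriv_eq_integral_one_sub hF_deriv hf_nonneg hF_zero]
    ring
  have hzero : ∀ v, u v 0 = 0 := fun v ↦ by simp [hu, hF_zero]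
  have hbound : ∀ v b, 0 ≤ b → u v b ≤ max 0 (v - α * μ) := fun v b hb ↦ by
    have hkey := mul_integral_Ioi_le_integral_one_sub hF_deriv hf_nonneg hF_zero hF_lim hMHR hGi hb
    have hFb : F b ∈ Icc 0 1 := ⟨hF_zero ▸ monotone_of_hasDerivAt_nonneg hF_deriv hf_nonneg hb,
      le_one_of_hasDerivAt_of_tendsto hF_deriv hf_nonneg hF_lim b⟩
    rw [hGμ] at hkey
    calc u v b ≤ F b * (v - α * μ) := by
          rw [hu']
          linarith [mul_le_mul_of_nonneg_left hkey hα.le]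
      _ ≤ max 0 (v - α * μ) := mul_le_max_zero hFb
  have hlim : ∀ v, Tendsto (u v) atTop (𝓝 (v - α * μ)) := fun v ↦ by
    have h := (tendsto_const_nhds (x := v)).mul hF_lim |>.sub <| (tendsto_const_nhds (x := α)).mul
      (intervalIntegral_tendsto_integral_Ioi 0 hGi tendsto_id)
    simpa only [mul_one, hGμ, id, ← hu'] using h
  refine ⟨fun v b _ hb ↦ hbound v b hb, hzero, fun v _ ↦ hlim v, fun v _ ↦ ?_⟩
  simpa only [hzero] using isLUB_image_Ici_of_le_max (g := u v) (c := v - α * μ)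
    (fun b hb ↦ by rw [hzero]; exact hbound v b hb) (hlim v)

/-- Lemma 4.3: for an MHR distribution `F` with density `f`, mean `μ`, and sample-bid
utility `u v b = v * F b - α * b * (1 - F b) - α * ∫ t in 0..b, t * f t`, every bid
yields utility at most `max 0 (v - α * μ)`, bidding `0` yields utility `0`, the utility
tends to `v - α * μ` as the bid tends to infinity, and consequently the supremum utility
is exactly `max 0 (v - α * μ)`. -/
theorem sample_bid_mhr_best_response
    (F f : ℝ → ℝ)
    (hf_nonneg : ∀ x, 0 ≤ f x)
    (hF_deriv : ∀ x, HasDerivAt F (f x) x)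
    (hF_zero : F 0 = 0)
    (hF_le_one : ∀ x, F x ≤ 1)
    (hF_lim : Tendsto F atTop (nhds 1))
    (hMHR : ∀ s t : ℝ, 0 ≤ s → s ≤ t → F t < 1 →
      f s / (1 - F s) ≤ f t / (1 - F t))
    (hint : IntegrableOn (fun t => t * f t) (Set.Ioi (0:ℝ)))
    (α : ℝ) (hα : 0 < α)
    (μ : ℝ) (hμ : μ = ∫ t in Set.Ioi (0:ℝ), t * f t)
    (u : ℝ → ℝ → ℝ)
    (hu : ∀ v b, u v b = v * F b - α * b * (1 - F b) - α * ∫ t in (0:ℝ)..b, t * f t) :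
    (∀ v b : ℝ, 0 ≤ v → 0 ≤ b → u v b ≤ max 0 (v - α * μ))
    ∧ (∀ v : ℝ, u v 0 = 0)
    ∧ (∀ v : ℝ, 0 ≤ v → Tendsto (fun b => u v b) atTop (nhds (v - α * μ)))
    ∧ (∀ v : ℝ, 0 ≤ v → IsLUB ((fun b => u v b) '' Set.Ici 0) (max 0 (v - α * μ))) :=
  sample_bid_mhr_best_response_general F f hf_nonneg hF_deriv hF_zero hF_lim hMHR hint α hα μ hμ u
    hu
end

section
/- Let F be an MHR cumulative distribution function on [0,∞) with density f (i.e. f(t)/(1 − F(t)) is monotone nondecreasing on {t : F(t) < 1}), and write q(v) = 1 − F(v). Suppose 0 ≤ v₂ < v₁ and 0 < q₁ ≤ q₂ where q₁ = q(v₁) and q₂ = q(v₂). Then for every v ∈ [v₂, v₁], q(v) ≥ q₂ · exp( ((v − v₂)/(v₁ − v₂)) · ln(q₁/q₂) ), i.e. q(v) ≥ q₂ · (q₁/q₂)^{(v − v₂)/(v₁ − v₂)}. -/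
/-! The log-survival function `log (1 - F)` has derivative `-f / (1 - F)`, minus the hazard
rate, so the MHR condition makes it concave. A concave function lies above its chords, and
exponentiating the chord of `log (1 - F)` between `v₂` and `v₁` gives the bound. -/

open Set Real

theorem ConcaveOn.secant_le {𝕜 : Type*} [Field 𝕜] [LinearOrder 𝕜] [IsStrictOrderedRing 𝕜]
    {s : Set 𝕜} {f : 𝕜 → 𝕜} (hf : ConcaveOn 𝕜 s f) {a b x : 𝕜} (ha : a ∈ s) (hb : b ∈ s)
    (hx : x ∈ Icc a b) : f a + (x - a) / (b - a) * (f b - f a) ≤ f x := by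
  obtain ⟨hax, hxb⟩ := hx
  rcases (hax.trans hxb).eq_or_lt with rfl | hab
  · simp [le_antisymm hxb hax]
  set t := (x - a) / (b - a)
  have hba : 0 < b - a := sub_pos.2 hab
  have ht0 : 0 ≤ t := div_nonneg (sub_nonneg.2 hax) hba.le
  have ht1 : t ≤ 1 := (div_le_one hba).2 (by linarith)
  have hx_eq : (1 - t) • a + t • b = x := by
    simp only [smul_eq_mul, t]
    field_simp
    ring
  have := hf.2 ha hb (sub_nonneg.2 ht1) ht0 (sub_add_cancel 1 t)
  rw [hx_eq, smul_eq_mul, smul_eq_mul] at this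
  linarith

theorem concaveOn_log_of_antitoneOn_div {D : Set ℝ} (hD : Convex ℝ D) {q q' : ℝ → ℝ}
    (hq : ∀ x ∈ D, HasDerivAt q (q' x) x) (hq_pos : ∀ x ∈ D, 0 < q x)
    (hanti : AntitoneOn (fun x => q' x / q x) D) : ConcaveOn ℝ D (fun x => log (q x)) := by
  have hlog : ∀ x ∈ D, HasDerivAt (fun x => log (q x)) (q' x / q x) x :=
    fun x hx => (hq x hx).log (hq_pos x hx).ne'
  refine AntitoneOn.concaveOn_of_deriv hD
    (fun x hx => (hlog x hx).continuousAt.continuousWithinAt)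
    (fun x hx => (hlog x (interior_subset hx)).differentiableAt.differentiableWithinAt) ?_
  intro x hx y hy hxy
  rw [(hlog x (interior_subset hx)).deriv, (hlog y (interior_subset hy)).deriv]
  exact hanti (interior_subset hx) (interior_subset hy) hxy

theorem mhr_quantile_interpolation_general
    (F f : ℝ → ℝ)
    (hf_nonneg : ∀ x, 0 ≤ f x)
    (hF_deriv : ∀ x, HasDerivAt F (f x) x)
    (hMHR : ∀ s t : ℝ, 0 ≤ s → s ≤ t → F t < 1 →
      f s / (1 - F s) ≤ f t / (1 - F t))
    (v₁ v₂ : ℝ) (hv₂ : 0 ≤ v₂)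
    (q₁ q₂ : ℝ) (hq₁ : q₁ = 1 - F v₁) (hq₂ : q₂ = 1 - F v₂)
    (hq₁_pos : 0 < q₁)
    (v : ℝ) (hv : v ∈ Set.Icc v₂ v₁) :
    q₂ * Real.exp (((v - v₂) / (v₁ - v₂)) * Real.log (q₁ / q₂)) ≤ 1 - F v := by
  have hF_mono : Monotone F := monotone_of_hasDerivAt_nonneg hF_deriv hf_nonneg
  have hsurv_pos : ∀ x ∈ Icc v₂ v₁, 0 < 1 - F x := fun x hx => by
    linarith [hF_mono hx.2]
  have hq₂_pos : 0 < q₂ := hq₂ ▸ hsurv_pos v₂ (left_mem_Icc.2 (hv.1.trans hv.2))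
  have hconc : ConcaveOn ℝ (Icc v₂ v₁) (fun x => log (1 - F x)) := by
    refine concaveOn_log_of_antitoneOn_div (convex_Icc v₂ v₁)
      (fun x _ => (hF_deriv x).const_sub 1) hsurv_pos fun x hx y hy hxy => ?_
    have := hMHR x y (hv₂.trans hx.1) hxy (by linarith [hsurv_pos y hy])
    simp only [neg_div]
    linarith
  have hchord := hconc.secant_le (left_mem_Icc.2 (hv.1.trans hv.2))
    (right_mem_Icc.2 (hv.1.trans hv.2)) hv
  rw [← hq₁, ← hq₂] at hchord
  calc q₂ * exp ((v - v₂) / (v₁ - v₂) * log (q₁ / q₂))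
      = exp (log q₂ + (v - v₂) / (v₁ - v₂) * (log q₁ - log q₂)) := by
        rw [exp_add, exp_log hq₂_pos, log_div hq₁_pos.ne' hq₂_pos.ne']
    _ ≤ exp (log (1 - F v)) := exp_le_exp.2 hchord
    _ = 1 - F v := exp_log (hsurv_pos v hv)

/-- Lemma 4.4 (quantile interpolation bound for MHR distributions): for an MHR
distribution `F` with density `f`, quantile `q v = 1 - F v`, reference points
`0 ≤ v₂ < v₁` with quantiles `q₂ ≥ q₁ > 0`, and any `v ∈ [v₂, v₁]`,
`1 - F v ≥ q₂ * exp (((v - v₂)/(v₁ - v₂)) * log (q₁/q₂))`. -/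
theorem mhr_quantile_interpolation
    (F f : ℝ → ℝ)
    (hf_nonneg : ∀ x, 0 ≤ f x)
    (hF_deriv : ∀ x, HasDerivAt F (f x) x)
    (hMHR : ∀ s t : ℝ, 0 ≤ s → s ≤ t → F t < 1 →
      f s / (1 - F s) ≤ f t / (1 - F t))
    (v₁ v₂ : ℝ) (hv₂ : 0 ≤ v₂) (hv₂₁ : v₂ < v₁)
    (q₁ q₂ : ℝ) (hq₁ : q₁ = 1 - F v₁) (hq₂ : q₂ = 1 - F v₂)
    (hq₁_pos : 0 < q₁) (hq₁₂ : q₁ ≤ q₂)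
    (v : ℝ) (hv : v ∈ Set.Icc v₂ v₁) :
    q₂ * Real.exp (((v - v₂) / (v₁ - v₂)) * Real.log (q₁ / q₂)) ≤ 1 - F v :=
  mhr_quantile_interpolation_general F f hf_nonneg hF_deriv hMHR v₁ v₂ hv₂ q₁ q₂ hq₁ hq₂ hq₁_pos v
    hv
end

section
/- Let F be an MHR cumulative distribution function on [0,∞) with density f (i.e. f(t)/(1 − F(t)) is monotone nondecreasing on {t : F(t) < 1}), write q(v) = 1 − F(v), and suppose there is q_m ∈ (0,1) with q(1/q_m) = q_m (i.e. the monopoly revenue is normalized so that posting price 1/q_m sells with probability q_m, giving revenue 1). Then the expected value satisfies ∫₀^∞ q(v) dv ≥ (q_m − 1)/(q_m · ln q_m). -/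
/-!
MHR says that the hazard rate `f / (1 - F)`, i.e. minus the derivative of `log (1 - F)`, is
nondecreasing, so `log (1 - F)` is concave on `[0, v]` whenever `F v < 1`. Since it vanishes at
`0`, its slope from the origin is nonincreasing: with `M = 1/q_m` and `c = log q_m / M = q_m log q_m`,
we get `1 - F v ≥ exp (c v)` on `[0, M]` and `1 - F v ≤ exp (c v)` beyond `M`. The first bound
integrates to `(exp (c M) - 1) / c = (q_m - 1) / (q_m log q_m)`; the second, as `c < 0`, makes
`1 - F` integrable, so the integral over `[0, M]` is at most the expected value.
-/

open MeasureTheory Set Real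

theorem ConcaveOn.antitoneOn_slope {s : Set ℝ} {φ : ℝ → ℝ} (hφ : ConcaveOn ℝ s φ) {a : ℝ}
    (ha : a ∈ s) : AntitoneOn (slope φ a) (s \ {a}) := by
  intro x hx y hy hxy
  have h := hφ.neg.secant_mono ha hx.1 hy.1 hx.2 hy.2 hxy
  simp only [Pi.neg_apply] at h
  rw [slope_def_field, slope_def_field]
  linear_combination h

theorem concaveOn_log_of_antitoneOn_deriv_div {D : Set ℝ} (hD : Convex ℝ D) {q q' : ℝ → ℝ}
    (hq : ∀ x ∈ D, HasDerivAt q (q' x) x) (hq_pos : ∀ x ∈ D, 0 < q x)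
    (h_anti : AntitoneOn (fun x => q' x / q x) D) :
    ConcaveOn ℝ D (fun x => log (q x)) := by
  have hlog : ∀ x ∈ D, HasDerivAt (fun x => log (q x)) (q' x / q x) x :=
    fun x hx => (hq x hx).log (hq_pos x hx).ne'
  refine AntitoneOn.concaveOn_of_deriv hD
    (fun x hx => (hlog x hx).continuousAt.continuousWithinAt)
    (fun x hx => (hlog x (interior_subset hx)).differentiableAt.differentiableWithinAt) ?_
  intro x hx y hy hxy
  rw [(hlog x (interior_subset hx)).deriv, (hlog y (interior_subset hy)).deriv]
  exact h_anti (interior_subset hx) (interior_subset hy) hxy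

theorem integral_exp_const_mul {c : ℝ} (hc : c ≠ 0) (a b : ℝ) :
    ∫ x in a..b, exp (c * x) = (exp (c * b) - exp (c * a)) / c := by
  simp [intervalIntegral.integral_comp_mul_left (fun x => exp x) hc, div_eq_inv_mul]

section MHR

variable {F f : ℝ → ℝ}

theorem concaveOn_log_one_sub_of_mhr (hf_nonneg : ∀ x, 0 ≤ f x)
    (hF_deriv : ∀ x, HasDerivAt F (f x) x)
    (hMHR : ∀ s t : ℝ, 0 ≤ s → s ≤ t → F t < 1 → f s / (1 - F s) ≤ f t / (1 - F t))
    {v : ℝ} (hv : F v < 1) : ConcaveOn ℝ (Icc 0 v) (fun t => log (1 - F t)) := by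
  have hF_mono : Monotone F := monotone_of_hasDerivAt_nonneg hF_deriv hf_nonneg
  refine concaveOn_log_of_antitoneOn_deriv_div (convex_Icc 0 v) (q' := fun t => -f t)
    (fun t _ => (hF_deriv t).const_sub 1) (fun t ht => sub_pos.2 ((hF_mono ht.2).trans_lt hv)) ?_
  intro s hs t ht hst
  simp only [neg_div, neg_le_neg_iff]
  exact hMHR s t hs.1 hst ((hF_mono ht.2).trans_lt hv)

theorem log_one_sub_div_antitone_of_mhr (hf_nonneg : ∀ x, 0 ≤ f x)
    (hF_deriv : ∀ x, HasDerivAt F (f x) x) (hF_zero : F 0 = 0)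
    (hMHR : ∀ s t : ℝ, 0 ≤ s → s ≤ t → F t < 1 → f s / (1 - F s) ≤ f t / (1 - F t))
    {x y : ℝ} (hx : 0 < x) (hxy : x ≤ y) (hy : F y < 1) :
    log (1 - F y) / y ≤ log (1 - F x) / x := by
  have h := (concaveOn_log_one_sub_of_mhr hf_nonneg hF_deriv hMHR hy).antitoneOn_slope
    (left_mem_Icc.2 (hx.le.trans hxy)) ⟨⟨hx.le, hxy⟩, hx.ne'⟩
    ⟨⟨hx.le.trans hxy, le_rfl⟩, (hx.trans_le hxy).ne'⟩ hxy
  simpa [slope_def_field, hF_zero] using h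

theorem exp_mul_le_one_sub_of_mhr (hf_nonneg : ∀ x, 0 ≤ f x)
    (hF_deriv : ∀ x, HasDerivAt F (f x) x) (hF_zero : F 0 = 0)
    (hMHR : ∀ s t : ℝ, 0 ≤ s → s ≤ t → F t < 1 → f s / (1 - F s) ≤ f t / (1 - F t))
    {M : ℝ} (hM : F M < 1) {v : ℝ} (hv : v ∈ Icc 0 M) :
    exp (log (1 - F M) / M * v) ≤ 1 - F v := by
  rcases hv.1.eq_or_lt with rfl | hv0
  · simp [hF_zero]
  have hFv : F v < 1 := (monotone_of_hasDerivAt_nonneg hF_deriv hf_nonneg hv.2).trans_lt hM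
  have h := log_one_sub_div_antitone_of_mhr hf_nonneg hF_deriv hF_zero hMHR hv0 hv.2 hM
  calc exp (log (1 - F M) / M * v) ≤ exp (log (1 - F v)) :=
        exp_le_exp.2 ((le_div_iff₀ hv0).1 h)
    _ = 1 - F v := exp_log (sub_pos.2 hFv)

theorem one_sub_le_exp_mul_of_mhr (hf_nonneg : ∀ x, 0 ≤ f x)
    (hF_deriv : ∀ x, HasDerivAt F (f x) x) (hF_zero : F 0 = 0)
    (hMHR : ∀ s t : ℝ, 0 ≤ s → s ≤ t → F t < 1 → f s / (1 - F s) ≤ f t / (1 - F t))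
    {M : ℝ} (hM : 0 < M) {v : ℝ} (hv : M ≤ v) :
    1 - F v ≤ exp (log (1 - F M) / M * v) := by
  rcases lt_or_ge (F v) 1 with hFv | hFv
  · have h := log_one_sub_div_antitone_of_mhr hf_nonneg hF_deriv hF_zero hMHR hM hv hFv
    calc 1 - F v = exp (log (1 - F v)) := (exp_log (sub_pos.2 hFv)).symm
      _ ≤ exp (log (1 - F M) / M * v) :=
        exp_le_exp.2 ((div_le_iff₀ (hM.trans_le hv)).1 h)
  · exact (sub_nonpos.2 hFv).trans (exp_pos _).le

theorem integrableOn_one_sub_of_mhr (hf_nonneg : ∀ x, 0 ≤ f x)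
    (hF_deriv : ∀ x, HasDerivAt F (f x) x) (hF_zero : F 0 = 0) (hF_le_one : ∀ x, F x ≤ 1)
    (hMHR : ∀ s t : ℝ, 0 ≤ s → s ≤ t → F t < 1 → f s / (1 - F s) ≤ f t / (1 - F t))
    {M : ℝ} (hM : 0 < M) (hFM : F M ∈ Ioo 0 1) :
    IntegrableOn (fun v => 1 - F v) (Ioi 0) := by
  have hq_cont : Continuous fun v => 1 - F v :=
    continuous_const.sub (continuous_iff_continuousAt.2 fun x => (hF_deriv x).continuousAt)
  have hslope : log (1 - F M) / M < 0 :=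
    div_neg_of_neg_of_pos (log_neg (sub_pos.2 hFM.2) (by linarith [hFM.1])) hM
  have h_tail : IntegrableOn (fun v => 1 - F v) (Ioi M) := by
    refine (integrableOn_exp_mul_Ioi hslope M).mono' hq_cont.aestronglyMeasurable.restrict ?_
    refine (ae_restrict_iff' measurableSet_Ioi).2 (ae_of_all _ fun v hv => ?_)
    rw [Real.norm_of_nonneg (sub_nonneg.2 (hF_le_one v))]
    exact one_sub_le_exp_mul_of_mhr hf_nonneg hF_deriv hF_zero hMHR hM (le_of_lt hv)
  rw [← Ioc_union_Ioi_eq_Ioi hM.le]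
  exact hq_cont.integrableOn_Ioc.union h_tail

end MHR

/-- Lemma 4.5: for a normalized MHR distribution (monopoly price `1/q_m`, monopoly
quantile `q_m`, so `1 - F (1/q_m) = q_m` and the monopoly revenue is `1`), the expected
value `∫ v in (0,∞), (1 - F v)` is at least `(q_m - 1)/(q_m * log q_m)`. -/
theorem mhr_expected_value_lower_bound
    (F f : ℝ → ℝ)
    (hf_nonneg : ∀ x, 0 ≤ f x)
    (hF_deriv : ∀ x, HasDerivAt F (f x) x)
    (hF_zero : F 0 = 0)
    (hF_le_one : ∀ x, F x ≤ 1)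
    (hMHR : ∀ s t : ℝ, 0 ≤ s → s ≤ t → F t < 1 →
      f s / (1 - F s) ≤ f t / (1 - F t))
    (qm : ℝ) (hqm : qm ∈ Set.Ioo (0:ℝ) 1)
    (hmonopoly : 1 - F (1 / qm) = qm) :
    (qm - 1) / (qm * Real.log qm) ≤ ∫ v in Set.Ioi (0:ℝ), (1 - F v) := by
  obtain ⟨hq0, hq1⟩ := hqm
  set M := 1 / qm
  have hM : 0 < M := by positivity
  have hFM : F M ∈ Ioo 0 1 := ⟨by linarith, by linarith⟩
  have hMqm : M * qm = 1 := one_div_mul_cancel hq0.ne'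
  have hcM : qm * log qm * M = log qm := by linear_combination log qm * hMqm
  have hc : log (1 - F M) / M = qm * log qm := by
    rw [hmonopoly, div_eq_iff hM.ne', hcM]
  have hq_int := integrableOn_one_sub_of_mhr hf_nonneg hF_deriv hF_zero hF_le_one hMHR hM hFM
  have hc0 : qm * log qm ≠ 0 := (mul_neg_of_pos_of_neg hq0 (log_neg hq0 hq1)).ne
  calc (qm - 1) / (qm * log qm) = ∫ v in 0..M, exp (qm * log qm * v) := by
        rw [integral_exp_const_mul hc0, hcM, exp_log hq0]; simp
    _ ≤ ∫ v in 0..M, (1 - F v) := by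
        refine intervalIntegral.integral_mono_on hM.le ?_ ?_ fun v hv => ?_
        · exact (continuous_exp.comp (continuous_const.mul continuous_id)).intervalIntegrable _ _
        · exact (intervalIntegrable_iff_integrableOn_Ioc_of_le hM.le).2
            (hq_int.mono_set Ioc_subset_Ioi_self)
        · rw [← hc]; exact exp_mul_le_one_sub_of_mhr hf_nonneg hF_deriv hF_zero hMHR hFM.2 hv
    _ = ∫ v in Ioc 0 M, (1 - F v) := intervalIntegral.integral_of_le hM.le
    _ ≤ ∫ v in Ioi 0, (1 - F v) :=
        setIntegral_mono_set hq_int (ae_of_all _ fun v => sub_nonneg.2 (hF_le_one v)) Ioc_subset_Ioi_self.eventuallyLE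
end

section
/- Let F be a cumulative distribution function on [0,∞) with density f, let α ∈ (0,1], and let v_m ≥ 0 be such that t·f(t) ≥ 1 − F(t) for all t ≥ v_m. Define u(v,b) = v·F(b) − α·b·(1 − F(b)) − α·∫₀^b t·f(t) dt. Then for every value v ≥ v_m and every bid b ∈ [v_m, v/α], u(v, v/α) ≥ u(v, b). -/
/-!
The `b`-derivative of the utility is `v f(b) - α (1 - F(b))`. On `[v_m, v/α]` regularity gives
`α (1 - F(b)) ≤ α b f(b) ≤ v f(b)`, so the utility is nondecreasing there and is maximised at
the right endpoint `v/α`.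
-/

open MeasureTheory

noncomputable def sampleBidUtility (F f : ℝ → ℝ) (α v b : ℝ) : ℝ :=
  v * F b - α * b * (1 - F b) - α * ∫ t in (0:ℝ)..b, t * f t

section SampleBid

variable {F f : ℝ → ℝ} {α v : ℝ}

theorem hasDerivAt_sampleBidUtility (hf_cont : Continuous f)
    (hF_deriv : ∀ x, HasDerivAt F (f x) x) (b : ℝ) :
    HasDerivAt (sampleBidUtility F f α v) (v * f b - α * (1 - F b)) b := by
  have hsale : HasDerivAt (fun x => α * x * (1 - F x)) (α * (1 - F b) + α * b * -f b) b :=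
    ((hasDerivAt_id b).const_mul α).mul ((hF_deriv b).const_sub 1) |>.congr_deriv (by simp)
  have hintegral : HasDerivAt (fun x => ∫ t in (0:ℝ)..x, t * f t) (b * f b) b :=
    ((continuous_id.mul hf_cont).integral_hasStrictDerivAt 0 b).hasDerivAt
  exact (((hF_deriv b).const_mul v).sub hsale).sub (hintegral.const_mul α)
    |>.congr_deriv (by ring)

theorem sampleBidUtility_deriv_nonneg {vm : ℝ} (hf_nonneg : ∀ x, 0 ≤ f x) (hα_pos : 0 < α)
    (hreg : ∀ t : ℝ, vm ≤ t → 1 - F t ≤ t * f t) {b : ℝ} (hb : b ∈ Set.Icc vm (v / α)) :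
    0 ≤ v * f b - α * (1 - F b) := by
  have hαb : α * b ≤ v := (le_div_iff₀' hα_pos).mp hb.2
  refine sub_nonneg.mpr ?_
  calc α * (1 - F b) ≤ α * (b * f b) := mul_le_mul_of_nonneg_left (hreg b hb.1) hα_pos.le
    _ = (α * b) * f b := by ring
    _ ≤ v * f b := mul_le_mul_of_nonneg_right hαb (hf_nonneg b)

theorem monotoneOn_sampleBidUtility {vm : ℝ} (hf_cont : Continuous f)
    (hf_nonneg : ∀ x, 0 ≤ f x) (hF_deriv : ∀ x, HasDerivAt F (f x) x) (hα_pos : 0 < α)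
    (hreg : ∀ t : ℝ, vm ≤ t → 1 - F t ≤ t * f t) :
    MonotoneOn (sampleBidUtility F f α v) (Set.Icc vm (v / α)) := by
  have hderiv := hasDerivAt_sampleBidUtility (α := α) (v := v) hf_cont hF_deriv
  refine monotoneOn_of_hasDerivWithinAt_nonneg (convex_Icc _ _)
    (fun x _ => (hderiv x).continuousAt.continuousWithinAt)
    (fun x _ => (hderiv x).hasDerivWithinAt) fun x hx => ?_
  exact sampleBidUtility_deriv_nonneg hf_nonneg hα_pos hreg (interior_subset hx)

end SampleBid

theorem sample_bid_prefers_scaled_value_general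
    (F f : ℝ → ℝ) (hf_cont : Continuous f)
    (hf_nonneg : ∀ x, 0 ≤ f x)
    (hF_deriv : ∀ x, HasDerivAt F (f x) x)
    (α : ℝ) (hα_pos : 0 < α)
    (vm : ℝ)
    (hreg : ∀ t : ℝ, vm ≤ t → 1 - F t ≤ t * f t)
    (u : ℝ → ℝ → ℝ)
    (hu : ∀ v b, u v b = v * F b - α * b * (1 - F b) - α * ∫ t in (0:ℝ)..b, t * f t)
    (v : ℝ)
    (b : ℝ) (hb : b ∈ Set.Icc vm (v / α)) :
    u v b ≤ u v (v / α) := by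
  have htop : v / α ∈ Set.Icc vm (v / α) := ⟨hb.1.trans hb.2, le_rfl⟩
  simpa only [hu, sampleBidUtility] using
    monotoneOn_sampleBidUtility hf_cont hf_nonneg hF_deriv hα_pos hreg hb htop hb.2

/-- Lemma 5.5: in the sample-bid mechanism with parameter `α ∈ (0, 1]`, for a
distribution whose virtual value is nonnegative above the monopoly reserve `vm`
(i.e. `1 - F t ≤ t * f t` for `t ≥ vm`), an agent with value `v ≥ vm` weakly prefers
bidding `v / α` to any bid in `[vm, v / α]`. -/
theorem sample_bid_prefers_scaled_value
    (F f : ℝ → ℝ) (hf_cont : Continuous f)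
    (hf_nonneg : ∀ x, 0 ≤ f x)
    (hF_deriv : ∀ x, HasDerivAt F (f x) x)
    (α : ℝ) (hα_pos : 0 < α) (hα_le : α ≤ 1)
    (vm : ℝ) (hvm : 0 ≤ vm)
    (hreg : ∀ t : ℝ, vm ≤ t → 1 - F t ≤ t * f t)
    (u : ℝ → ℝ → ℝ)
    (hu : ∀ v b, u v b = v * F b - α * b * (1 - F b) - α * ∫ t in (0:ℝ)..b, t * f t)
    (v : ℝ) (hv : vm ≤ v)
    (b : ℝ) (hb : b ∈ Set.Icc vm (v / α)) :
    u v b ≤ u v (v / α) :=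
  sample_bid_prefers_scaled_value_general F f hf_cont hf_nonneg hF_deriv α hα_pos vm hreg u hu v b
    hb
end

section
/- For every q̂ ∈ [0.62, 1), every v ∈ [0, 1/q̂], and every b ≥ 0, it holds that v·b·(1 − q̂)/(b·(1 − q̂) + 1) ≤ 0.7·ln(b·(1 − q̂) + 1)/(1 − q̂). -/
/-! Writing `x = b (1 - q̂)`, the left side is `v · x / (x + 1)`. The elementary bound
`x / (x + 1) ≤ log (x + 1)` reduces the claim to `v ≤ 0.7 / (1 - q̂)`, and this follows from
`v ≤ 1 / q̂` because `1 - q̂ ≤ 0.7 q̂` as soon as `q̂ ≥ 1 / 1.7 ≈ 0.588`. -/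

namespace Real

lemma div_add_one_le_log_add_one {x : ℝ} (hx : -1 < x) : x / (x + 1) ≤ log (x + 1) := by
  have hx1 : 0 < x + 1 := by linarith
  calc x / (x + 1) = 1 - (x + 1)⁻¹ := by field_simp; ring
    _ ≤ log (x + 1) := one_sub_inv_le_log_of_pos hx1

end Real

lemma one_div_le_div_one_sub {α q : ℝ} (hq : 0 < q) (hq1 : q < 1) (h : 1 - q ≤ α * q) :
    1 / q ≤ α / (1 - q) := by
  rw [div_le_div_iff₀ hq (by linarith)]
  linarith

/-- Case-(i) computation in Lemma 5.8: for `q̂ ∈ [0.62, 1)`, a value `v ∈ [0, 1/q̂]`,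
and any bid `b ≥ 0`, the utility against the truncated revenue curve is nonpositive:
`v * b * (1 - q̂) / (b * (1 - q̂) + 1) ≤ 0.7 * log (b * (1 - q̂) + 1) / (1 - q̂)`. -/
theorem truncated_curve_low_value_utility_nonpositive
    (qh v b : ℝ) (hqh : qh ∈ Set.Ico (0.62:ℝ) 1)
    (hv : v ∈ Set.Icc (0:ℝ) (1 / qh)) (hb : 0 ≤ b) :
    v * b * (1 - qh) / (b * (1 - qh) + 1)
      ≤ 0.7 * Real.log (b * (1 - qh) + 1) / (1 - qh) := by
  obtain ⟨hq_lo, hq_hi⟩ := hqh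
  obtain ⟨hv_nonneg, hv_le⟩ := hv
  have hx : 0 ≤ b * (1 - qh) := mul_nonneg hb (by linarith)
  have hv_le' : v ≤ 0.7 / (1 - qh) :=
    hv_le.trans (one_div_le_div_one_sub (by norm_num at hq_lo ⊢; linarith) hq_hi
      (by norm_num at hq_lo ⊢; linarith))
  calc v * b * (1 - qh) / (b * (1 - qh) + 1)
        = v * (b * (1 - qh) / (b * (1 - qh) + 1)) := by ring
    _ ≤ v * Real.log (b * (1 - qh) + 1) :=
        mul_le_mul_of_nonneg_left (Real.div_add_one_le_log_add_one (by linarith)) hv_nonneg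
    _ ≤ 0.7 / (1 - qh) * Real.log (b * (1 - qh) + 1) :=
        mul_le_mul_of_nonneg_right hv_le' (Real.log_nonneg (by linarith))
    _ = 0.7 * Real.log (b * (1 - qh) + 1) / (1 - qh) := by ring
end

section
/- Let R: [0,1] → ℝ be concave and nonnegative with R(q_m) = 1 = max_{q ∈ [0,1]} R(q) for some q_m ∈ (0,1). Let b ≥ 0 and let q_b ∈ [q_m, 1] satisfy R(q_b) = b·q_b. Then 0.7·( b·q_b + ∫_{q_b}^1 R(q)/q dq ) ≥ 0.7·ln( b·(1 − q_m) + 1 )/(1 − q_m). -/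
/-!
On `[q_m, 1]` the concave curve `R` lies above its chord from `(q_m, 1)` to `(1, 0)`, so
`∫_{q_b}^1 R(q)/q dq ≥ (q_b - 1 - log q_b)/(1 - q_m)`. With `L = 1 - q_m`, the claim then
reduces to `log ((b L + 1) q_b) ≤ (b L + 1) q_b - 1`, an instance of `log x ≤ x - 1`.
-/

open MeasureTheory Set

theorem ConcaveOn.chord_le {s : Set ℝ} {f : ℝ → ℝ} (hf : ConcaveOn ℝ s f) {x y z : ℝ}
    (hx : x ∈ s) (hy : y ∈ s) (hxy : x < y) (hz : z ∈ Icc x y) :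
    ((y - z) * f x + (z - x) * f y) / (y - x) ≤ f z := by
  have hyx : 0 < y - x := sub_pos.2 hxy
  have hcomb : (y - z) / (y - x) * x + (z - x) / (y - x) * y = z := by field_simp; ring
  have key := hf.2 hx hy (div_nonneg (sub_nonneg.2 hz.2) hyx.le)
    (div_nonneg (sub_nonneg.2 hz.1) hyx.le) (by field_simp; ring)
  simp only [smul_eq_mul, hcomb] at key
  calc ((y - z) * f x + (z - x) * f y) / (y - x)
      = (y - z) / (y - x) * f x + (z - x) / (y - x) * f y := by ring
    _ ≤ f z := key

theorem ConcaveOn.mul_div_le_of_nonneg {s : Set ℝ} {f : ℝ → ℝ} (hf : ConcaveOn ℝ s f)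
    {x y z : ℝ} (hx : x ∈ s) (hy : y ∈ s) (hxy : x < y) (hfy : 0 ≤ f y) (hz : z ∈ Icc x y) :
    f x * (y - z) / (y - x) ≤ f z :=
  calc f x * (y - z) / (y - x) ≤ ((y - z) * f x + (z - x) * f y) / (y - x) := by
        gcongr
        nlinarith [mul_nonneg (sub_nonneg.2 hz.1) hfy]
    _ ≤ f z := hf.chord_le hx hy hxy hz

theorem ConcaveOn.intervalIntegrable_of_abs_le {f : ℝ → ℝ} {a b C : ℝ} (hab : a ≤ b)
    (hf : ConcaveOn ℝ (Icc a b) f) (hC : ∀ x ∈ Icc a b, |f x| ≤ C) :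
    IntervalIntegrable f volume a b := by
  rw [intervalIntegrable_iff_integrableOn_Ioo_of_le hab]
  have hcont : ContinuousOn f (Ioo a b) := by
    simpa only [interior_Icc] using hf.continuousOn_interior
  refine IntegrableOn.of_bound measure_Ioo_lt_top
    (hcont.aestronglyMeasurable measurableSet_Ioo) C ?_
  filter_upwards [ae_restrict_mem measurableSet_Ioo] with x hx
  exact hC x (Ioo_subset_Icc_self hx)

theorem ConcaveOn.intervalIntegrable_div_self {f : ℝ → ℝ} {a b C : ℝ} (ha : 0 < a)
    (hab : a ≤ b) (hf : ConcaveOn ℝ (Icc a b) f) (hC : ∀ x ∈ Icc a b, |f x| ≤ C) :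
    IntervalIntegrable (fun x => f x / x) volume a b :=
  (hf.intervalIntegrable_of_abs_le hab hC).mul_continuousOn
    (continuousOn_inv₀.mono fun _ hx hx0 => notMem_uIcc_of_lt ha (ha.trans_le hab) (hx0 ▸ hx))

theorem intervalIntegrable_inv_of_pos {a b : ℝ} (ha : 0 < a) (hb : 0 < b) :
    IntervalIntegrable (fun x : ℝ => x⁻¹) volume a b :=
  intervalIntegrable_inv_iff.2 (Or.inr (notMem_uIcc_of_lt ha hb))

theorem integral_inv_sub_one {a b : ℝ} (ha : 0 < a) (hb : 0 < b) :
    ∫ x in a..b, (x⁻¹ - 1) = Real.log (b / a) - (b - a) := by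
  rw [intervalIntegral.integral_sub (intervalIntegrable_inv_of_pos ha hb) intervalIntegrable_const,
    integral_inv_of_pos ha hb]
  simp

theorem le_integral_div_self_of_one_sub_div_le {f : ℝ → ℝ} {a L : ℝ} (ha : 0 < a) (ha1 : a ≤ 1)
    (hf : ∀ q ∈ Icc a 1, (1 - q) / L ≤ f q)
    (hint : IntervalIntegrable (fun q => f q / q) volume a 1) :
    (a - 1 - Real.log a) / L ≤ ∫ q in a..1, f q / q := by
  have hpoint : ∀ q ∈ Icc a 1, (q⁻¹ - 1) / L ≤ f q / q := by
    intro q hq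
    have hq0 : 0 < q := ha.trans_le hq.1
    rw [show (q⁻¹ - 1) / L = (1 - q) / L / q by field_simp]
    gcongr
    exact hf q hq
  calc (a - 1 - Real.log a) / L = ∫ q in a..1, (q⁻¹ - 1) / L := by
        rw [intervalIntegral.integral_div, integral_inv_sub_one ha one_pos, one_div, Real.log_inv]
        ring
    _ ≤ ∫ q in a..1, f q / q :=
        intervalIntegral.integral_mono_on ha1
          (((intervalIntegrable_inv_of_pos ha one_pos).sub intervalIntegrable_const).div_const _)
          hint hpoint

theorem Real.log_mul_add_one_div_le {b L q : ℝ} (hb : 0 ≤ b) (hL : 0 < L) (hq : 0 < q) :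
    Real.log (b * L + 1) / L ≤ b * q + (q - 1 - Real.log q) / L := by
  have hlog := Real.log_le_sub_one_of_pos (x := (b * L + 1) * q) (by positivity)
  rw [Real.log_mul (by positivity) hq.ne'] at hlog
  rw [div_le_iff₀ hL, add_mul, div_mul_cancel₀ _ hL.ne']
  nlinarith

theorem sample_bid_payment_lower_bound_general
    (R : ℝ → ℝ)
    (hconc : ConcaveOn ℝ (Set.Icc 0 1) R)
    (hnonneg : ∀ q ∈ Set.Icc (0:ℝ) 1, 0 ≤ R q)
    (qm : ℝ) (hqm : qm ∈ Set.Ioo (0:ℝ) 1)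
    (hRqm : R qm = 1)
    (hRle : ∀ q ∈ Set.Icc (0:ℝ) 1, R q ≤ 1)
    (b : ℝ) (hb : 0 ≤ b)
    (qb : ℝ) (hqb : qb ∈ Set.Icc qm 1) :
    0.7 * Real.log (b * (1 - qm) + 1) / (1 - qm)
      ≤ 0.7 * (b * qb + ∫ q in qb..1, R q / q) := by
  obtain ⟨hqm0, hqm1⟩ := hqm
  obtain ⟨hqbm, hqb1⟩ := hqb
  have hqb0 : 0 < qb := hqm0.trans_le hqbm
  have hchord : ∀ q ∈ Icc qb 1, (1 - q) / (1 - qm) ≤ R q := fun q hq => by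
    simpa only [hRqm, one_mul] using hconc.mul_div_le_of_nonneg ⟨hqm0.le, hqm1.le⟩
      ⟨zero_le_one, le_rfl⟩ hqm1 (hnonneg 1 ⟨zero_le_one, le_rfl⟩) ⟨hqbm.trans hq.1, hq.2⟩
  have hint : IntervalIntegrable (fun q => R q / q) volume qb 1 :=
    (hconc.subset (Icc_subset_Icc hqb0.le le_rfl) (convex_Icc _ _)).intervalIntegrable_div_self
      hqb0 hqb1 fun q hq => abs_le.2 ⟨by linarith [hnonneg q ⟨hqb0.le.trans hq.1, hq.2⟩],
        hRle q ⟨hqb0.le.trans hq.1, hq.2⟩⟩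
  have hintegral := le_integral_div_self_of_one_sub_div_le hqb0 hqb1 hchord hint
  have hlog := Real.log_mul_add_one_div_le hb (sub_pos.2 hqm1) hqb0
  rw [mul_div_assoc]
  gcongr
  linarith

/-- First part of Lemma 5.9: for a normalized concave revenue curve `R` (maximum
revenue `R q_m = 1` at monopoly quantile `q_m`), the expected payment of any bid `b`
whose quantile is `q_b ∈ [q_m, 1]` (i.e. `R q_b = b * q_b`) in the sample-bid mechanism
with `α = 0.7` is at least `0.7 * log (b * (1 - q_m) + 1) / (1 - q_m)`. -/
theorem sample_bid_payment_lower_bound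
    (R : ℝ → ℝ)
    (hconc : ConcaveOn ℝ (Set.Icc 0 1) R)
    (hnonneg : ∀ q ∈ Set.Icc (0:ℝ) 1, 0 ≤ R q)
    (qm : ℝ) (hqm : qm ∈ Set.Ioo (0:ℝ) 1)
    (hRqm : R qm = 1)
    (hRle : ∀ q ∈ Set.Icc (0:ℝ) 1, R q ≤ 1)
    (b : ℝ) (hb : 0 ≤ b)
    (qb : ℝ) (hqb : qb ∈ Set.Icc qm 1)
    (hqb_eq : R qb = b * qb) :
    0.7 * Real.log (b * (1 - qm) + 1) / (1 - qm)
      ≤ 0.7 * (b * qb + ∫ q in qb..1, R q / q) :=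
  sample_bid_payment_lower_bound_general R hconc hnonneg qm hqm hRqm hRle b hb qb hqb
end

section
/- Let F be a cumulative distribution function with density f on [l,h] where 0 ≤ l ≤ h (so F(l) = 0 and F(h) = 1), and let x: [l,h] → [0,1] be monotone nondecreasing. Then ∫_l^h x(v)·( v·f(v) − (1 − F(v)) ) dv ≤ x(h) · sup_{p ∈ [l,h]} p·(1 − F(p)). -/
/-!
Writing `R p = p (1 - F p)` for the revenue curve, the virtual-welfare integrand is `-R'`.
By the layer-cake formula `x v = ∫₀^{x h} 1[s < x v] ds` and Fubini, the virtual welfare is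
the integral over `s ∈ (0, x h]` of the integral of `-R'` over the superlevel set `{x > s}`.
Since `x` is monotone, this set is (up to a point) an interval `(t, h]`, over which `-R'`
integrates to `R t - R h = R t ≤ sup R`.
-/

open MeasureTheory Set

section LayerCake

variable {α : Type*} [MeasurableSpace α] {μ : Measure α} [SFinite μ] {X g : α → ℝ}

lemma integrable_uncurry_indicator_lt (hX : Measurable X) (hg : Integrable g μ) (c : ℝ) :
    Integrable (Function.uncurry fun s v => {v | s < X v}.indicator g v)
      ((volume.restrict (Ioc 0 c)).prod μ) := by
  have : (Function.uncurry fun s v => {v | s < X v}.indicator g v)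
      = {p : ℝ × α | p.1 < X p.2}.indicator (fun p => g p.2) := by
    ext ⟨s, v⟩
    simp [indicator_apply]
  rw [this]
  exact (hg.comp_snd _).indicator (measurableSet_lt measurable_fst (hX.comp measurable_snd))

lemma integrable_setIntegral_lt (hX : Measurable X) (hg : Integrable g μ) (c : ℝ) :
    Integrable (fun s => ∫ v in {v | s < X v}, g v ∂μ) (volume.restrict (Ioc 0 c)) := by
  simpa only [Function.uncurry_apply_pair, integral_indicator (measurableSet_lt measurable_const hX)]
    using (integrable_uncurry_indicator_lt hX hg c).integral_prod_left

lemma integral_mul_eq_integral_setIntegral_lt (hX : Measurable X) (hg : Integrable g μ)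
    {c : ℝ} (hX0 : ∀ v, 0 ≤ X v) (hXc : ∀ v, X v ≤ c) :
    ∫ v, X v * g v ∂μ = ∫ s in Ioc 0 c, ∫ v in {v | s < X v}, g v ∂μ := by
  have hlayer : ∀ v, ∫ s in Ioc (0 : ℝ) c, {w | s < X w}.indicator g v = X v * g v := by
    intro v
    have hIoo : Ioc 0 c ∩ Iio (X v) = Ioo 0 (X v) := by
      ext s
      constructor
      · rintro ⟨⟨hs0, -⟩, hsX⟩
        exact ⟨hs0, hsX⟩
      · rintro ⟨hs0, hsX⟩
        exact ⟨⟨hs0, hsX.le.trans (hXc v)⟩, hsX⟩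
    calc ∫ s in Ioc 0 c, {w | s < X w}.indicator g v
        = ∫ s in Ioc 0 c, (Iio (X v)).indicator (fun _ => g v) s := by
          simp only [indicator_apply, mem_ofPred_eq, mem_Iio]
      _ = X v * g v := by
          rw [setIntegral_indicator measurableSet_Iio, setIntegral_const, hIoo,
            Real.volume_real_Ioo_of_le (hX0 v), sub_zero, smul_eq_mul]
  calc ∫ v, X v * g v ∂μ
      = ∫ v, (∫ s in Ioc 0 c, {w | s < X w}.indicator g v) ∂μ := by simp only [hlayer]
    _ = ∫ s in Ioc 0 c, ∫ v, {w | s < X w}.indicator g v ∂μ :=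
        (integral_integral_swap (integrable_uncurry_indicator_lt hX hg c)).symm
    _ = ∫ s in Ioc 0 c, ∫ v in {v | s < X v}, g v ∂μ := by
        simp only [integral_indicator (measurableSet_lt measurable_const hX)]

end LayerCake

lemma Ioc_inter_ae_eq_Ioc_of_isUpperSet {U : Set ℝ} (hU : IsUpperSet U) {l h : ℝ} (hlh : l ≤ h) :
    ∃ t ∈ Icc l h, (Ioc l h ∩ U : Set ℝ) =ᵐ[volume] Ioc t h := by
  by_cases hne : (Icc l h ∩ U).Nonempty
  · have hbdd : BddBelow (Icc l h ∩ U) := ⟨l, fun w hw => hw.1.1⟩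
    set t := sInf (Icc l h ∩ U)
    have hlt : l ≤ t := le_csInf hne fun w hw => hw.1.1
    have hth : t ≤ h := by
      obtain ⟨w, hw⟩ := hne
      exact (csInf_le hbdd hw).trans hw.1.2
    have hsub : Ioc t h ⊆ Ioc l h ∩ U := by
      intro v hv
      obtain ⟨w, hw, hwv⟩ := exists_lt_of_csInf_lt hne hv.1
      exact ⟨⟨hlt.trans_lt hv.1, hv.2⟩, hU hwv.le hw.2⟩
    have hsup : Ioc l h ∩ U ⊆ Icc t h := fun v hv =>
      ⟨csInf_le hbdd ⟨Ioc_subset_Icc_self hv.1, hv.2⟩, hv.1.2⟩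
    exact ⟨t, ⟨hlt, hth⟩, (hsup.eventuallyLE.trans Ioc_ae_eq_Icc.symm.le).antisymm
      hsub.eventuallyLE⟩
  · refine ⟨h, ⟨hlh, le_rfl⟩, ?_⟩
    have hempty : Ioc l h ∩ U = ∅ :=
      subset_empty_iff.mp fun v hv => hne ⟨v, Ioc_subset_Icc_self hv.1, hv.2⟩
    rw [hempty, Ioc_self]
    rfl

theorem Monotone.setIntegral_mul_le {X g : ℝ → ℝ} (hX : Monotone X) {l h c M : ℝ} (hlh : l ≤ h)
    (hg : IntegrableOn g (Ioc l h)) (hX0 : ∀ v, 0 ≤ X v) (hXc : ∀ v, X v ≤ c)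
    (hM : ∀ t ∈ Icc l h, ∫ v in Ioc t h, g v ≤ M) :
    ∫ v in Ioc l h, X v * g v ≤ c * M := by
  have hc : 0 ≤ c := (hX0 0).trans (hXc 0)
  have hlevel : ∀ s, ∫ v in {v | s < X v}, g v ∂volume.restrict (Ioc l h) ≤ M := by
    intro s
    obtain ⟨t, ht, hae⟩ := Ioc_inter_ae_eq_Ioc_of_isUpperSet
      (U := {v | s < X v}) ((isUpperSet_Ioi s).preimage hX) hlh
    rw [Measure.restrict_restrict (measurableSet_lt measurable_const hX.measurable), inter_comm,
      setIntegral_congr_set hae]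
    exact hM t ht
  rw [integral_mul_eq_integral_setIntegral_lt hX.measurable hg hX0 hXc]
  calc ∫ s in Ioc 0 c, ∫ v in {v | s < X v}, g v ∂volume.restrict (Ioc l h)
      ≤ ∫ _ in Ioc 0 c, M :=
        integral_mono (integrable_setIntegral_lt hX.measurable hg c) (integrable_const M) hlevel
    _ = c * M := by rw [setIntegral_const, Real.volume_real_Ioc_of_le hc, sub_zero, smul_eq_mul]

def revenue (F : ℝ → ℝ) (p : ℝ) : ℝ := p * (1 - F p)

lemma hasDerivAt_revenue {F : ℝ → ℝ} {f p : ℝ} (hF : HasDerivAt F f p) :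
    HasDerivAt (revenue F) (1 - F p - p * f) p :=
  ((hasDerivAt_id' p).mul (hF.const_sub 1)).congr_deriv (by ring)

theorem integral_virtualValue_mul_density {F f : ℝ → ℝ} {a b : ℝ}
    (hF : ∀ v ∈ uIcc a b, HasDerivAt F (f v) v) (hf : ContinuousOn f (uIcc a b)) :
    ∫ v in a..b, (v * f v - (1 - F v)) = revenue F a - revenue F b := by
  have hFc : ContinuousOn F (uIcc a b) := fun v hv => (hF v hv).continuousAt.continuousWithinAt
  have hint : IntervalIntegrable (fun v => v * f v - (1 - F v)) volume a b :=
    ((continuousOn_id.mul hf).sub (continuousOn_const.sub hFc)).intervalIntegrable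
  rw [intervalIntegral.integral_eq_sub_of_hasDerivAt (f := -revenue F)
    (fun v hv => (hasDerivAt_revenue (hF v hv)).neg.congr_deriv (by ring)) hint]
  simp only [Pi.neg_apply]
  ring

theorem setIntegral_mul_virtualValue_le {X G φ : ℝ → ℝ} {l h c : ℝ} (hlh : l ≤ h)
    (hX : Monotone X) (hX0 : ∀ v, 0 ≤ X v) (hXc : ∀ v, X v ≤ c)
    (hφ : Continuous φ) (hG : ∀ v, HasDerivAt G (φ v) v) (hGh : G h = 1) :
    ∫ v in Ioc l h, X v * (v * φ v - (1 - G v)) ≤ c * sSup (revenue G '' Icc l h) := by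
  have hGc : Continuous G := continuous_iff_continuousAt.2 fun v => (hG v).continuousAt
  have hR : Continuous (revenue G) := continuous_id.mul (continuous_const.sub hGc)
  have hRh : revenue G h = 0 := by simp [revenue, hGh]
  refine hX.setIntegral_mul_le hlh ?_ hX0 hXc fun t ht => ?_
  · exact ((continuous_id.mul hφ).sub (continuous_const.sub hGc)).integrableOn_Ioc
  · rw [← intervalIntegral.integral_of_le ht.2,
      integral_virtualValue_mul_density (fun v _ => hG v) hφ.continuousOn, hRh, sub_zero]
    exact le_csSup (isCompact_Icc.image hR).bddAbove (mem_image_of_mem _ ht)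

lemma exists_continuous_antiderivative_extension {f F : ℝ → ℝ} {l h : ℝ} (hlh : l ≤ h)
    (hf : ContinuousOn f (Icc l h)) (hF : ∀ v ∈ Icc l h, F v = ∫ t in l..v, f t) :
    ∃ φ G : ℝ → ℝ, Continuous φ ∧ (∀ v, HasDerivAt G (φ v) v) ∧
      EqOn φ f (Icc l h) ∧ EqOn G F (Icc l h) := by
  set φ := IccExtend hlh fun v : Icc l h => f v
  have hφf : EqOn φ f (Icc l h) := fun v hv => IccExtend_of_mem _ _ hv
  have hφ : Continuous φ := continuous_IccExtend_iff.mpr hf.domRestrict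
  refine ⟨φ, fun v => ∫ t in l..v, φ t, hφ, fun v => ?_, hφf, fun v hv => ?_⟩
  · exact intervalIntegral.integral_hasDerivAt_right (hφ.intervalIntegrable l v)
      hφ.aestronglyMeasurable.stronglyMeasurableAtFilter hφ.continuousAt
  · rw [hF v hv]
    exact intervalIntegral.integral_congr fun t ht =>
      hφf (uIcc_subset_Icc (left_mem_Icc.2 hlh) hv ht)

theorem virtual_welfare_upper_bound_general
    (l h : ℝ) (hlh : l ≤ h)
    (F f : ℝ → ℝ)
    (hf_cont : ContinuousOn f (Set.Icc l h))
    (hF_def : ∀ v ∈ Set.Icc l h, F v = ∫ t in l..v, f t)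
    (hFh : F h = 1)
    (x : ℝ → ℝ)
    (hx_mono : MonotoneOn x (Set.Icc l h))
    (hx_range : ∀ v ∈ Set.Icc l h, x v ∈ Set.Icc (0:ℝ) 1) :
    ∫ v in l..h, x v * (v * f v - (1 - F v))
      ≤ x h * sSup ((fun p => p * (1 - F p)) '' Set.Icc l h) := by
  obtain ⟨φ, G, hφ, hG, hφf, hGF⟩ := exists_continuous_antiderivative_extension hlh hf_cont hF_def
  set X := IccExtend hlh fun v : Icc l h => x v
  have hX0 : ∀ v, 0 ≤ X v := fun v => (hx_range _ (projIcc l h hlh v).2).1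
  have hXh : ∀ v, X v ≤ x h := fun v =>
    hx_mono (projIcc l h hlh v).2 (right_mem_Icc.2 hlh) (projIcc l h hlh v).2.2
  have hLHS : ∫ v in l..h, x v * (v * f v - (1 - F v))
      = ∫ v in Ioc l h, X v * (v * φ v - (1 - G v)) := by
    rw [intervalIntegral.integral_of_le hlh]
    refine setIntegral_congr_fun measurableSet_Ioc fun v hv => ?_
    have hv' := Ioc_subset_Icc_self hv
    simp only [X, IccExtend_of_mem _ _ hv', hφf hv', hGF hv']
  have himg : (fun p => p * (1 - F p)) '' Icc l h = revenue G '' Icc l h :=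
    image_congr fun p hp => by simp only [revenue, hGF hp]
  rw [hLHS, himg]
  exact setIntegral_mul_virtualValue_le hlh (hx_mono.monotone.IccExtend hlh) hX0 hXh hφ hG
    ((hGF (right_mem_Icc.2 hlh)).trans hFh)

/-- Lemma 6.2 (Myerson virtual-welfare bound): for a distribution `F` with density `f`
on `[l, h] ⊆ [0, ∞)` and any monotone nondecreasing interim allocation
`x : [l,h] → [0,1]`, the expected virtual welfare
`∫ v in l..h, x v * (v * f v - (1 - F v))` is at most `x h` times the optimal
posted-price revenue `sup_{p ∈ [l,h]} p * (1 - F p)`. -/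
theorem virtual_welfare_upper_bound
    (l h : ℝ) (hl : 0 ≤ l) (hlh : l ≤ h)
    (F f : ℝ → ℝ)
    (hf_cont : ContinuousOn f (Set.Icc l h))
    (hf_nonneg : ∀ v ∈ Set.Icc l h, 0 ≤ f v)
    (hF_def : ∀ v ∈ Set.Icc l h, F v = ∫ t in l..v, f t)
    (hFh : F h = 1)
    (x : ℝ → ℝ)
    (hx_mono : MonotoneOn x (Set.Icc l h))
    (hx_range : ∀ v ∈ Set.Icc l h, x v ∈ Set.Icc (0:ℝ) 1) :
    ∫ v in l..h, x v * (v * f v - (1 - F v))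
      ≤ x h * sSup ((fun p => p * (1 - F p)) '' Set.Icc l h) :=
  virtual_welfare_upper_bound_general l h hlh F f hf_cont hF_def hFh x hx_mono hx_range
end

section
/- Let 0 ≤ l ≤ h and let x: [l,h] → [0,1] be measurable with U = ∫_l^h x(v) dv. Then ∫_l^h x(v)·(2v − h) dv ≤ U·(h − U). Consequently, if in addition h ≤ 2l, β ≥ 1, and ∫_l^h x(v)·(2v − h) dv ≥ l·(h − l)/β, then h² ≥ 4·l·(h − l)/β and U ≥ (h − √(h² − 4·l·(h − l)/β))/2. -/
open MeasureTheory Set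

/-!
Since `0 ≤ x ≤ 1`, pointwise `x v * (v - a) ≤ max (v - a) 0`, so the first moment of `x` about any
`a ∈ [l, h]` is at most `(h - a) ^ 2 / 2`, the moment of the indicator of `[a, h]`. Choosing
`a = h - U`, where that indicator has mass `U`, turns this into `∫ x v * (2v - h) ≤ U * (h - U)`.
A revenue bound `c ≤ U * (h - U)` then forces `4c ≤ h²` and puts `U` above the smaller root of
`t * (h - t) = c`.
-/

theorem intervalIntegrable_of_measurable_of_mem_Icc {l h : ℝ} (hlh : l ≤ h) {x : ℝ → ℝ}
    (hx_meas : Measurable x) (hx_range : ∀ v ∈ Icc l h, x v ∈ Icc (0 : ℝ) 1) :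
    IntervalIntegrable x volume l h := by
  rw [intervalIntegrable_iff_integrableOn_Icc_of_le hlh]
  refine IntegrableOn.of_bound measure_Icc_lt_top hx_meas.aestronglyMeasurable 1 ?_
  filter_upwards [ae_restrict_mem measurableSet_Icc] with v hv
  rw [Real.norm_of_nonneg (hx_range v hv).1]
  exact (hx_range v hv).2

theorem integral_max_sub_zero {l a h : ℝ} (hla : l ≤ a) (hah : a ≤ h) :
    ∫ v in l..h, max (v - a) 0 = (h - a) ^ 2 / 2 := by
  have hcont : Continuous fun v : ℝ => max (v - a) 0 := by fun_prop
  rw [← intervalIntegral.integral_add_adjacent_intervals (hcont.intervalIntegrable l a)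
    (hcont.intervalIntegrable a h)]
  have below : ∫ v in l..a, max (v - a) 0 = 0 := by
    rw [intervalIntegral.integral_congr (g := fun _ => (0 : ℝ)), intervalIntegral.integral_zero]
    intro v hv
    rw [uIcc_of_le hla] at hv
    exact max_eq_right (sub_nonpos.2 hv.2)
  have above : ∫ v in a..h, max (v - a) 0 = (h - a) ^ 2 / 2 := by
    rw [intervalIntegral.integral_congr (g := fun v => v - a),
      intervalIntegral.integral_comp_sub_right (fun v => v), integral_id]
    · ring
    intro v hv
    rw [uIcc_of_le hah] at hv
    exact max_eq_left (sub_nonneg.2 hv.1)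
  rw [below, above, zero_add]

theorem integral_mul_sub_le_of_mem_Icc {l a h : ℝ} (hla : l ≤ a) (hah : a ≤ h) {x : ℝ → ℝ}
    (hx : IntervalIntegrable x volume l h) (hx_range : ∀ v ∈ Icc l h, x v ∈ Icc (0 : ℝ) 1) :
    ∫ v in l..h, x v * (v - a) ≤ (h - a) ^ 2 / 2 := by
  have pointwise : ∀ v ∈ Icc l h, x v * (v - a) ≤ max (v - a) 0 := by
    intro v hv
    obtain ⟨hx0, hx1⟩ := hx_range v hv
    rcases le_total v a with hva | hav
    · exact (mul_nonpos_of_nonneg_of_nonpos hx0 (sub_nonpos.2 hva)).trans (le_max_right _ _)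
    · exact (mul_le_of_le_one_left (sub_nonneg.2 hav) hx1).trans (le_max_left _ _)
  calc ∫ v in l..h, x v * (v - a)
      ≤ ∫ v in l..h, max (v - a) 0 :=
        intervalIntegral.integral_mono_on (hla.trans hah) (hx.mul_continuousOn (by fun_prop))
          (by apply Continuous.intervalIntegrable; fun_prop) pointwise
    _ = (h - a) ^ 2 / 2 := integral_max_sub_zero hla hah

theorem integral_mul_two_mul_sub_le {l h : ℝ} (hlh : l ≤ h) {x : ℝ → ℝ}
    (hx : IntervalIntegrable x volume l h) (hx_range : ∀ v ∈ Icc l h, x v ∈ Icc (0 : ℝ) 1) :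
    ∫ v in l..h, x v * (2 * v - h) ≤ (∫ v in l..h, x v) * (h - ∫ v in l..h, x v) := by
  have hU_nonneg : 0 ≤ ∫ v in l..h, x v :=
    intervalIntegral.integral_nonneg hlh fun v hv => (hx_range v hv).1
  have hU_le : ∫ v in l..h, x v ≤ h - l := by
    simpa using intervalIntegral.integral_mono_on hlh hx intervalIntegrable_const
      fun v hv => (hx_range v hv).2
  generalize hU : ∫ v in l..h, x v = U at hU_nonneg hU_le ⊢
  have moment := integral_mul_sub_le_of_mem_Icc (a := h - U) (by linarith) (by linarith) hx hx_range
  have split : ∫ v in l..h, x v * (2 * v - h)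
      = 2 * (∫ v in l..h, x v * (v - (h - U))) + (h - 2 * U) * U := by
    rw [intervalIntegral.integral_congr (g := fun v => 2 * (x v * (v - (h - U))) + (h - 2 * U) * x v)
        fun v _ => by ring,
      intervalIntegral.integral_add ((hx.mul_continuousOn (by fun_prop)).const_mul _)
        (hx.const_mul _),
      intervalIntegral.integral_const_mul, intervalIntegral.integral_const_mul, hU]
  rw [split]
  linarith

theorem four_mul_le_sq_of_le_mul_sub {c h U : ℝ} (hc : c ≤ U * (h - U)) : 4 * c ≤ h ^ 2 := by
  nlinarith [sq_nonneg (h - 2 * U)]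

theorem sub_sqrt_div_two_le_of_le_mul_sub {c h U : ℝ} (hc : c ≤ U * (h - U)) :
    (h - √(h ^ 2 - 4 * c)) / 2 ≤ U := by
  rcases le_total (h - 2 * U) 0 with hneg | hpos
  · linarith [Real.sqrt_nonneg (h ^ 2 - 4 * c)]
  · have hroot : h - 2 * U ≤ √(h ^ 2 - 4 * c) := Real.le_sqrt_of_sq_le (by nlinarith)
    linarith

theorem uniform_distribution_high_type_utility_general
    (l h : ℝ) (hlh : l ≤ h)
    (x : ℝ → ℝ) (hx_meas : Measurable x)
    (hx_range : ∀ v ∈ Set.Icc l h, x v ∈ Set.Icc (0:ℝ) 1) :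
    (∫ v in l..h, x v * (2 * v - h))
        ≤ (∫ v in l..h, x v) * (h - ∫ v in l..h, x v)
    ∧ (∀ β : ℝ, h ≤ 2 * l → 1 ≤ β →
        l * (h - l) / β ≤ ∫ v in l..h, x v * (2 * v - h) →
        4 * l * (h - l) / β ≤ h ^ 2
        ∧ (h - Real.sqrt (h ^ 2 - 4 * l * (h - l) / β)) / 2 ≤ ∫ v in l..h, x v) := by
  have revenue_le := integral_mul_two_mul_sub_le hlh
    (intervalIntegrable_of_measurable_of_mem_Icc hlh hx_meas hx_range) hx_range
  refine ⟨revenue_le, fun β _ _ hrev => ?_⟩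
  have hc := hrev.trans revenue_le
  rw [show 4 * l * (h - l) / β = 4 * (l * (h - l) / β) by ring]
  exact ⟨four_mul_le_sq_of_le_mul_sub hc, sub_sqrt_div_two_le_of_le_mul_sub hc⟩

/-- Lemma 6.3: for `0 ≤ l ≤ h` and a measurable allocation `x : [l,h] → [0,1]` with
`U = ∫ v in l..h, x v`, one has `∫ v in l..h, x v * (2v - h) ≤ U * (h - U)`.
Consequently, if `h ≤ 2l`, `β ≥ 1`, and `∫ v in l..h, x v * (2v - h) ≥ l * (h - l) / β`,
then `h² ≥ 4l(h - l)/β` and `U ≥ (h - √(h² - 4l(h - l)/β)) / 2`. -/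
theorem uniform_distribution_high_type_utility
    (l h : ℝ) (hl : 0 ≤ l) (hlh : l ≤ h)
    (x : ℝ → ℝ) (hx_meas : Measurable x)
    (hx_range : ∀ v ∈ Set.Icc l h, x v ∈ Set.Icc (0:ℝ) 1) :
    (∫ v in l..h, x v * (2 * v - h))
        ≤ (∫ v in l..h, x v) * (h - ∫ v in l..h, x v)
    ∧ (∀ β : ℝ, h ≤ 2 * l → 1 ≤ β →
        l * (h - l) / β ≤ ∫ v in l..h, x v * (2 * v - h) →
        4 * l * (h - l) / β ≤ h ^ 2
        ∧ (h - Real.sqrt (h ^ 2 - 4 * l * (h - l) / β)) / 2 ≤ ∫ v in l..h, x v) :=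
  uniform_distribution_high_type_utility_general l h hlh x hx_meas hx_range
end
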